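/- Let f₁, f₂ : ℝ → ℝ be C² and h > 0. Define the Heun step H_g^s(x) = x + (s/2)(g(x) + g(x + s g(x))) and the composite x₄ = (H_{−f₂}^{√h} ∘ H_{−f₁}^{√h} ∘ H_{f₂}^{√h} ∘ H_{f₁}^{√h})(x₀). Then there exist K, h̄ > 0 such that for all h ∈ (0, h̄): |x₄ − x₀ − h(f₁(x₀)f₂′(x₀) − f₂(x₀)f₁′(x₀))| ≤ K h^{3/2}, i.e., the Heun composite map approximates a step of length h along the Lie bracket [f₁,f₂](x₀) = f₁(x₀)f₂′(x₀) − f₂(x₀)f₁′(x₀) with error O(h^{3/2}). -/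

import Mathlib

/-!
Heun's step is second-order accurate in the following sense: if `y s = x₀ + c₁ s + c₂ s² + O(s³)`
as `s → 0`, then `H_g^s (y s) = x₀ + (c₁ + g) s + (c₂ + g' c₁ + g' g / 2) s² + O(s³)`, with `g` and
`g'` evaluated at `x₀`; this only needs the first-order Taylor expansion of `g` at `x₀` with a
quadratic remainder. Propagating the coefficients through the steps along `f₁, f₂, -f₁, -f₂`, the
linear coefficient returns to `0` and the quadratic one becomes `f₁ f₂' - f₂ f₁'`. Taking `s = √h`
turns the `O(s³)` error into `O(h^{3/2})`.
-/

open Filter Topology Asymptotics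

/-- Heun (trapezoidal) integration step for `ẋ = g(x)` with step size `s`. -/
noncomputable def heunStep (g : ℝ → ℝ) (s x : ℝ) : ℝ := x + s / 2 * (g x + g (x + s * g x))

theorem ContDiff.isBigO_sub_sub_deriv_mul {g : ℝ → ℝ} (hg : ContDiff ℝ 2 g) (x₀ : ℝ) :
    (fun y => g y - g x₀ - deriv g x₀ * (y - x₀)) =O[𝓝 x₀] fun y => (y - x₀) ^ 2 := by
  have hquad : (fun y => iteratedDeriv 2 g x₀ / 2 * (y - x₀) ^ 2) =O[𝓝 x₀]
      fun y => (y - x₀) ^ 2 :=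
    isBigO_const_mul_self _ _ _
  refine ((taylor_isLittleO_univ (n := 2) hg).isBigO.add hquad).congr_left fun y => ?_
  simp only [taylorWithinEval_succ, taylor_within_zero_eval, iteratedDerivWithin_univ,
    iteratedDeriv_one, smul_eq_mul, Nat.factorial_zero, Nat.factorial_one, Nat.reduceAdd,
    CharP.cast_eq_zero, Nat.cast_one, zero_add, mul_one, inv_one, pow_one, one_mul]
  ring

section Expansion

variable {𝕜 : Type*} [NormedField 𝕜] {y : 𝕜 → 𝕜} {x₀ c₁ c₂ : 𝕜}

theorem isBigO_sub_sub_mul_of_expansion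
    (hy : (fun s => y s - x₀ - (c₁ * s + c₂ * s ^ 2)) =O[𝓝 0] (· ^ 3)) :
    (fun s => y s - x₀ - c₁ * s) =O[𝓝 0] (· ^ 2) :=
  ((hy.trans (isLittleO_pow_pow (by norm_num)).isBigO).add
    (isBigO_const_mul_self c₂ _ _)).congr_left fun s => by ring

theorem isBigO_sub_of_expansion
    (hy : (fun s => y s - x₀ - (c₁ * s + c₂ * s ^ 2)) =O[𝓝 0] (· ^ 3)) :
    (fun s => y s - x₀) =O[𝓝 0] fun s => s := by
  have hsq : (fun s : 𝕜 => s ^ 2) =O[𝓝 0] fun s => s := by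
    simpa using (isLittleO_pow_pow (𝕜 := 𝕜) (m := 1) (n := 2) (by norm_num)).isBigO
  exact (((isBigO_sub_sub_mul_of_expansion hy).trans hsq).add
    (isBigO_const_mul_self c₁ _ _)).congr_left fun s => by ring

theorem tendsto_of_expansion
    (hy : (fun s => y s - x₀ - (c₁ * s + c₂ * s ^ 2)) =O[𝓝 0] (· ^ 3)) :
    Tendsto y (𝓝 0) (𝓝 x₀) :=
  tendsto_sub_nhds_zero_iff.mp <| (isBigO_sub_of_expansion hy).trans_tendsto tendsto_id

end Expansion

theorem heunStep_expansion {g y : ℝ → ℝ} {x₀ c₁ c₂ : ℝ} (hg : ContDiff ℝ 2 g)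
    (hy : (fun s => y s - x₀ - (c₁ * s + c₂ * s ^ 2)) =O[𝓝 0] (· ^ 3)) :
    (fun s => heunStep g s (y s) - x₀ -
      ((c₁ + g x₀) * s + (c₂ + deriv g x₀ * c₁ + deriv g x₀ * g x₀ / 2) * s ^ 2))
      =O[𝓝 0] (· ^ 3) := by
  set R : ℝ → ℝ := fun u => g u - g x₀ - deriv g x₀ * (u - x₀) with hR
  set z : ℝ → ℝ := fun s => y s + s * g (y s) with hz
  have hy₁ := isBigO_sub_of_expansion hy
  have hyt := tendsto_of_expansion hy
  have hgy : (fun s => g (y s) - g x₀) =O[𝓝 0] fun s => s :=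
    (((hg.differentiable (by norm_num) x₀).hasDerivAt.isBigO_sub).comp_tendsto hyt).trans hy₁
  have hz₁ : (fun s => z s - x₀) =O[𝓝 0] fun s => s := by
    have hbdd : (fun s => g (y s)) =O[𝓝 0] fun _ => (1 : ℝ) :=
      ((hg.continuous.tendsto x₀).comp hyt).isBigO_one ℝ
    have hstep : (fun s => s * g (y s)) =O[𝓝 0] fun s => s :=
      ((isBigO_refl (fun s : ℝ => s) _).mul hbdd).congr_right fun s => mul_one s
    exact (hy₁.add hstep).congr_left fun s => by simp only [hz]; ring
  have hRy : (fun s => R (y s)) =O[𝓝 0] (· ^ 2) :=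
    ((hg.isBigO_sub_sub_deriv_mul x₀).comp_tendsto hyt).trans (hy₁.pow 2)
  have hRz : (fun s => R (z s)) =O[𝓝 0] (· ^ 2) :=
    ((hg.isBigO_sub_sub_deriv_mul x₀).comp_tendsto
      (tendsto_sub_nhds_zero_iff.mp (hz₁.trans_tendsto tendsto_id))).trans (hz₁.pow 2)
  have hslope : (fun s => s * (deriv g x₀ * (y s - x₀ - c₁ * s))) =O[𝓝 0] (· ^ 3) :=
    ((isBigO_refl (fun s : ℝ => s) _).mul
      ((isBigO_sub_sub_mul_of_expansion hy).const_mul_left _)).congr_right fun s => by ring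
  have hdrift : (fun s => s ^ 2 * (deriv g x₀ / 2 * (g (y s) - g x₀))) =O[𝓝 0] (· ^ 3) :=
    ((isBigO_refl (fun s : ℝ => s ^ 2) _).mul (hgy.const_mul_left _)).congr_right
      fun s => by ring
  have hremainder : (fun s => s / 2 * (R (y s) + R (z s))) =O[𝓝 0] (· ^ 3) :=
    (((isBigO_refl (fun s : ℝ => s) _).mul (hRy.add hRz)).const_mul_left 2⁻¹).congr
      (fun s => by ring) fun s => by ring
  refine (((hy.add hslope).add hdrift).add hremainder).congr_left fun s => ?_
  simp only [heunStep, hR, hz]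
  ring

theorem exists_bound_sqrt_of_isBigO_cube {F : ℝ → ℝ} (hF : F =O[𝓝 0] (· ^ 3)) :
    ∃ K h' : ℝ, 0 < K ∧ 0 < h' ∧ ∀ h : ℝ, 0 < h → h < h' →
      |F (Real.sqrt h)| ≤ K * h ^ ((3 : ℝ) / 2) := by
  obtain ⟨K, hK, hKF⟩ := hF.exists_pos
  obtain ⟨ε, hε, hball⟩ := Metric.eventually_nhds_iff.mp hKF.bound
  refine ⟨K, ε ^ 2, hK, by positivity, fun h hpos hlt => ?_⟩
  have hsqrt : dist (Real.sqrt h) 0 < ε := by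
    rw [Real.dist_0_eq_abs, abs_of_nonneg (Real.sqrt_nonneg h)]
    exact (Real.sqrt_lt' hε).mpr hlt
  have hpow : h ^ ((3 : ℝ) / 2) = Real.sqrt h ^ 3 := by
    rw [Real.sqrt_eq_rpow, ← Real.rpow_natCast, ← Real.rpow_mul hpos.le]
    norm_num
  simpa [hpow, abs_of_nonneg (Real.sqrt_nonneg h)] using hball hsqrt

theorem stmt_4 (f₁ f₂ : ℝ → ℝ) (hf₁ : ContDiff ℝ 2 f₁) (hf₂ : ContDiff ℝ 2 f₂) (x₀ : ℝ) :
    ∃ K h' : ℝ, 0 < K ∧ 0 < h' ∧ ∀ h : ℝ, 0 < h → h < h' →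
      let s := Real.sqrt h
      let x₄ := heunStep (fun x => -f₂ x) s (heunStep (fun x => -f₁ x) s
        (heunStep f₂ s (heunStep f₁ s x₀)))
      |x₄ - x₀ - h * (f₁ x₀ * deriv f₂ x₀ - f₂ x₀ * deriv f₁ x₀)| ≤ K * h ^ ((3:ℝ)/2) := by
  have hstart : (fun s : ℝ => x₀ - x₀ - (0 * s + 0 * s ^ 2)) =O[𝓝 0] (· ^ 3) := by
    simpa using isBigO_zero _ _
  have hcomposite := heunStep_expansion hf₂.neg <| heunStep_expansion hf₁.neg <|
    heunStep_expansion hf₂ <| heunStep_expansion hf₁ hstart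
  have hbracket : (fun s => heunStep (fun x => -f₂ x) s (heunStep (fun x => -f₁ x) s
      (heunStep f₂ s (heunStep f₁ s x₀))) - x₀ -
      s ^ 2 * (f₁ x₀ * deriv f₂ x₀ - f₂ x₀ * deriv f₁ x₀)) =O[𝓝 0] (· ^ 3) := by
    refine hcomposite.congr_left fun s => ?_
    simp only [deriv.fun_neg]
    ring
  obtain ⟨K, h', hK, hh', hbound⟩ := exists_bound_sqrt_of_isBigO_cube hbracket
  refine ⟨K, h', hK, hh', fun h hpos hlt => ?_⟩
  simpa only [Real.sq_sqrt hpos.le] using hbound h hpos hlt
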